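/- arXiv:2404.07002 — 3 statements merged into one kernel-verified Lean document; each statement's English description precedes it below -/
import Mathlib

section
/- There is no real number t with 0 < |t| < 1 satisfying both 2(1-t²)² = 1 + 18t² + t⁴ and -2(1-t²)² = 10t(1+t²). -/
theorem stmt4 :
    ¬ ∃ t : ℝ, 0 < |t| ∧ |t| < 1 ∧
      2 * (1 - t ^ 2) ^ 2 = 1 + 18 * t ^ 2 + t ^ 4 ∧
      -(2 * (1 - t ^ 2) ^ 2) = 10 * t * (1 + t ^ 2) := by
  rintro ⟨t, h0, h1, h2, h3⟩
  rcases abs_lt.mp h1 with ⟨hl, hr⟩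
  nlinarith [sq_nonneg t, sq_nonneg (t-1), sq_nonneg (t+1), sq_nonneg (t^2-1), sq_nonneg (t^2+5*t), sq_nonneg (5*t+1), mul_pos h0 h0]
end

section
/- There is no real number t with 0 < |t| < 1 satisfying both 10(1-t²)² = 1 + 18t² + t⁴ and 6(1-t²)² = 10t(1+t²). -/
theorem stmt5 :
    ¬ ∃ t : ℝ, 0 < |t| ∧ |t| < 1 ∧
      10 * (1 - t ^ 2) ^ 2 = 1 + 18 * t ^ 2 + t ^ 4 ∧
      6 * (1 - t ^ 2) ^ 2 = 10 * t * (1 + t ^ 2) := by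
  rintro ⟨t, ht0, ht1, h1, h2⟩
  have ht : t ≠ 0 := by
    intro h
    simp [h] at ht0
  have key : t * (3 * t ^ 2 - 4 * t + 3) = 0 := by
    linear_combination (1/5) * h1 - (3/10) * h2
  have hpos : 3 * t ^ 2 - 4 * t + 3 > 0 := by nlinarith [sq_nonneg (3 * t - 2)]
  rcases mul_eq_zero.mp key with h | h
  · exact ht h
  · linarith
end

section
/- There is no real number t with 0 < |t| < 1 satisfying both 10(1-t²)² = 1 + 18t² + t⁴ and -6(1-t²)² = 10t(1+t²). -/
theorem stmt6 :
    ¬ ∃ t : ℝ, 0 < |t| ∧ |t| < 1 ∧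
      10 * (1 - t ^ 2) ^ 2 = 1 + 18 * t ^ 2 + t ^ 4 ∧
      -(6 * (1 - t ^ 2) ^ 2) = 10 * t * (1 + t ^ 2) := by
  rintro ⟨t, ht0, ht1, h1, h2⟩
  have htne : t ≠ 0 := by
    intro h; rw [h] at ht0; simp at ht0
  have h3 : t * (3 * t ^ 2 + 4 * t + 3) = 0 := by
    linear_combination (-3/10 : ℝ) * h2 - (1/5 : ℝ) * h1
  have h4 : 3 * t ^ 2 + 4 * t + 3 > 0 := by nlinarith [sq_nonneg (t + 2/3)]
  rcases mul_eq_zero.mp h3 with h | h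
  · exact htne h
  · linarith
end
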